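/- arXiv:2206.14255 — 3 statements merged into one kernel-verified Lean document; each statement's English description precedes it below -/
import Mathlib

section
/- Let α ≥ 1, λ ∈ (0,1], and let k = ⌈λ^(-1/α)⌉. Then there exists a constant C depending only on α such that (1/λ²)·(k·λ² + Σ_{i=k+1}^{r} i^(-2α)) ≤ C·λ^(-1/α) for every integer r > k. -/
open Real Finset

private lemma telesc (f : ℕ → ℝ) (k r : ℕ) (h : k ≤ r) :
    ∑ i ∈ Finset.Icc (k+1) r, (f (i-1) - f i) = f k - f r := by
  induction r, h using Nat.le_induction with
  | base => simp
  | succ n hn ih =>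
      rw [show k + 1 = k + 1 from rfl, Finset.sum_Icc_succ_top (by omega), ih]
      simp only [Nat.add_sub_cancel]
      ring

private lemma pointwise (α : ℝ) (hα : 1 ≤ α) (i : ℕ) (hi : 2 ≤ i) :
    (i:ℝ) ^ (-(2*α)) ≤ ((i-1:ℕ):ℝ) ^ (1-2*α) - (i:ℝ) ^ (1-2*α) := by
  set x : ℝ := (i:ℝ) with hx
  have hx2 : (2:ℝ) ≤ x := by rw [hx]; exact_mod_cast hi
  have hx0 : 0 < x := by linarith
  have hx1 : 0 < x - 1 := by linarith
  have hcast : ((i-1:ℕ):ℝ) = x - 1 := by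
    have : (1:ℕ) ≤ i := by omega
    push_cast [this]; ring
  rw [hcast]
  have hp : (1:ℝ) ≤ 2*α - 1 := by linarith
  have hs : (-1:ℝ) ≤ 1/(x-1) := by
    have h0 : (0:ℝ) ≤ 1/(x-1) := by positivity
    linarith
  have hbern := one_add_mul_self_le_rpow_one_add hs hp
  -- (1 + (2α-1)/(x-1)) ≤ (1 + 1/(x-1))^(2α-1) = (x/(x-1))^(2α-1)
  have h1 : (1:ℝ) + 1/(x-1) = x / (x-1) := by field_simp; ring
  rw [h1] at hbern
  -- (x-1)^(1-2α) = x^(1-2α) * (x/(x-1))^(2α-1)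
  have key : (x-1) ^ (1-2*α) = x ^ (1-2*α) * (x/(x-1)) ^ (2*α-1) := by
    have hxx : x ^ (1-2*α) * x ^ (2*α-1) = 1 := by
      rw [← Real.rpow_add hx0]; norm_num
    calc (x-1) ^ (1-2*α)
        = ((x-1) ^ (2*α-1))⁻¹ := by
          rw [show (1-2*α) = -(2*α-1) by ring, Real.rpow_neg hx1.le]
      _ = x ^ (1-2*α) * x ^ (2*α-1) * ((x-1) ^ (2*α-1))⁻¹ := by rw [hxx, one_mul]
      _ = x ^ (1-2*α) * (x/(x-1)) ^ (2*α-1) := by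
          rw [Real.div_rpow hx0.le hx1.le]; ring
  have hxpow : (0:ℝ) < x ^ (1-2*α) := Real.rpow_pos_of_pos hx0 _
  have h2 : x ^ (1-2*α) + (2*α-1) * x ^ (1-2*α) / (x-1) ≤ (x-1) ^ (1-2*α) := by
    rw [key]
    calc x ^ (1-2*α) + (2*α-1) * x ^ (1-2*α) / (x-1)
        = x ^ (1-2*α) * (1 + (2*α-1) * (1/(x-1))) := by ring
      _ ≤ x ^ (1-2*α) * (x/(x-1)) ^ (2*α-1) :=
          mul_le_mul_of_nonneg_left hbern hxpow.le
  have h3 : x ^ (-(2*α)) ≤ (2*α-1) * x ^ (1-2*α) / (x-1) := by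
    have e : x ^ (1-2*α) = x * x ^ (-(2*α)) := by
      rw [show (1-2*α) = 1 + (-(2*α)) by ring, Real.rpow_add hx0, Real.rpow_one]
    have hy : 0 < x ^ (-(2*α)) := Real.rpow_pos_of_pos hx0 _
    rw [e, le_div_iff₀ hx1]
    nlinarith [mul_le_mul_of_nonneg_left (show x - 1 ≤ (2*α-1)*x by nlinarith) hy.le]
  linarith

theorem stmt2 (α : ℝ) (hα : 1 ≤ α) :
    ∃ C : ℝ, 0 < C ∧ ∀ lam : ℝ, 0 < lam → lam ≤ 1 →
      ∀ r : ℕ, ⌈lam ^ (-1/α)⌉₊ < r →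
        (1/lam^2) * ((⌈lam ^ (-1/α)⌉₊ : ℝ) * lam^2 +
          ∑ i ∈ Finset.Icc (⌈lam ^ (-1/α)⌉₊ + 1) r, (i:ℝ) ^ (-(2*α)))
        ≤ C * lam ^ (-1/α) := by
  refine ⟨3, by norm_num, fun lam hl0 hl1 r hr => ?_⟩
  have hα0 : 0 < α := by linarith
  set k := ⌈lam ^ (-1/α)⌉₊ with hk
  set μ := lam ^ (-1/α) with hμ
  have hμ1 : 1 ≤ μ := by
    apply Real.one_le_rpow_of_pos_of_le_one_of_nonpos hl0 hl1
    rw [neg_div]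
    exact neg_nonpos_of_nonneg (by positivity)
  have hμ0 : 0 < μ := by linarith
  have hμk : μ ≤ (k:ℝ) := Nat.le_ceil _
  have hk1 : 1 ≤ k := by exact_mod_cast Nat.one_le_ceil_iff.mpr hμ0
  have hkμ : (k:ℝ) ≤ μ + 1 := (Nat.ceil_lt_add_one hμ0.le).le
  -- sum bound
  have hsum : ∑ i ∈ Finset.Icc (k+1) r, (i:ℝ) ^ (-(2*α)) ≤ (k:ℝ) ^ (1-2*α) := by
    have htel := telesc (fun i => (i:ℝ) ^ (1-2*α)) k r hr.le
    calc ∑ i ∈ Finset.Icc (k+1) r, (i:ℝ) ^ (-(2*α))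
        ≤ ∑ i ∈ Finset.Icc (k+1) r,
            (((i-1:ℕ):ℝ) ^ (1-2*α) - (i:ℝ) ^ (1-2*α)) := by
          apply Finset.sum_le_sum
          intro i hi
          have : k + 1 ≤ i := (Finset.mem_Icc.mp hi).1
          exact pointwise α hα i (by omega)
      _ = (k:ℝ) ^ (1-2*α) - (r:ℝ) ^ (1-2*α) := htel
      _ ≤ (k:ℝ) ^ (1-2*α) := by
          have : (0:ℝ) ≤ (r:ℝ) ^ (1-2*α) := by positivity
          linarith
  -- k^(1-2α) ≤ lam^2 * μ
  have hkb : (k:ℝ) ^ (1-2*α) ≤ lam^2 * μ := by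
    have h1 : (k:ℝ) ^ (1-2*α) ≤ μ ^ (1-2*α) :=
      Real.rpow_le_rpow_of_nonpos hμ0 hμk (by linarith)
    have h2 : μ ^ (1-2*α) = lam ^ 2 * μ := by
      rw [hμ, ← Real.rpow_natCast lam 2, ← Real.rpow_mul hl0.le, ← Real.rpow_add hl0]
      congr 1
      field_simp
      ring
    linarith
  have hl2 : (0:ℝ) < lam^2 := by positivity
  calc (1/lam^2) * ((k:ℝ) * lam^2 +
          ∑ i ∈ Finset.Icc (k+1) r, (i:ℝ) ^ (-(2*α)))
      ≤ (1/lam^2) * ((k:ℝ) * lam^2 + lam^2 * μ) := by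
        apply mul_le_mul_of_nonneg_left _ (by positivity)
        have := hsum.trans hkb
        linarith
    _ = (k:ℝ) + μ := by field_simp
    _ ≤ (μ + 1) + μ := by linarith
    _ ≤ 3 * μ := by linarith
end

section
/- In the bandlimited MSE setup, for indices i ∈ [ℓ+1, ℓ+b]: if 1 + 2λ/μ_i > (σ²/n)·b then (1/b)·a_i(λ) > (σ²/n)·μ_i², and so M(i) < M(i−1); whereas if 1 + 2λ/μ_i ≤ (σ²/n)·b then M(i) ≥ M(i−1). -/
open Finset

theorem sub_pred_eq_of_mem_band {ℓ b : ℕ} {c : ℝ} {u v M : ℕ → ℝ}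
    (hM : ∀ r, M r = 1 - (1/b) * (∑ i ∈ Icc (ℓ+1) (min (ℓ+b) r), u i)
        + c * ∑ i ∈ Icc 1 r, v i)
    {i : ℕ} (hi₁ : ℓ + 1 ≤ i) (hi₂ : i ≤ ℓ + b) :
    M i - M (i - 1) = c * v i - (1/b) * u i := by
  obtain ⟨k, rfl⟩ : ∃ k, i = k + 1 := ⟨i - 1, by omega⟩
  rw [hM, hM, Nat.add_sub_cancel, min_eq_right hi₂, min_eq_right (by omega),
    sum_Icc_succ_top hi₁, sum_Icc_succ_top (by omega)]
  ring

theorem mul_sq_lt_inv_mul_iff {c b μ lam : ℝ} (hb : 0 < b) (hμ : 0 < μ) :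
    c * μ ^ 2 < (1/b) * ((μ + lam) ^ 2 - lam ^ 2) ↔ c * b < 1 + 2 * lam / μ := by
  have hrhs : 1 + 2 * lam / μ = (μ + 2 * lam) / μ := by field_simp
  rw [hrhs, lt_div_iff₀ hμ, one_div_mul_eq_div, lt_div_iff₀ hb,
    show (μ + lam) ^ 2 - lam ^ 2 = (μ + 2 * lam) * μ by ring,
    show c * μ ^ 2 * b = c * b * μ * μ by ring, mul_lt_mul_iff_left₀ hμ]

theorem stmt11_general (n ℓ b : ℕ) (hlb : ℓ + b ≤ n)
    (μ : ℕ → ℝ) (hpos : ∀ i, 1 ≤ i → i ≤ n → 0 < μ i)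
    (lam σ : ℝ) (hlam : 0 < lam)
    (a : ℕ → ℝ) (ha : ∀ i, a i = (μ i + lam)^2 - lam^2)
    (M : ℕ → ℝ)
    (hM : ∀ r, M r = 1 - (1/b) * (∑ i ∈ Finset.Icc (ℓ+1) (min (ℓ+b) r), a i / (μ i + lam)^2)
        + (σ^2 / n) * ∑ i ∈ Finset.Icc 1 r, (μ i)^2 / (μ i + lam)^2) :
    ∀ i : ℕ, ℓ + 1 ≤ i → i ≤ ℓ + b →
      ((σ^2 / n) * b < 1 + 2*lam/μ i →
        (σ^2 / n) * (μ i)^2 < (1/b) * a i ∧ M i < M (i-1)) ∧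
      (1 + 2*lam/μ i ≤ (σ^2 / n) * b → M (i-1) ≤ M i) := by
  intro i hi₁ hi₂
  have hμ : 0 < μ i := hpos i (by omega) (by omega)
  have hb : (0 : ℝ) < b := by exact_mod_cast (by omega : 0 < b)
  have hden : 0 < (μ i + lam) ^ 2 := by positivity
  have hinc : M i - M (i - 1) = ((σ^2 / n) * (μ i)^2 - (1/b) * a i) / (μ i + lam) ^ 2 := by
    rw [sub_pred_eq_of_mem_band hM hi₁ hi₂]
    ring
  have hcrit := ha i ▸ mul_sq_lt_inv_mul_iff (c := σ^2 / n) (lam := lam) hb hμ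
  refine ⟨fun h => ?_, fun h => ?_⟩
  · have hlt := hcrit.2 h
    refine ⟨hlt, ?_⟩
    have : M i - M (i - 1) < 0 := by
      rw [hinc]
      exact div_neg_of_neg_of_pos (by linarith) hden
    linarith
  · have hle := not_lt.1 (mt hcrit.1 (not_lt.2 h))
    have : 0 ≤ M i - M (i - 1) := by
      rw [hinc]
      exact div_nonneg (by linarith) hden.le
    linarith

theorem stmt11 (n ℓ b : ℕ) (hn : 1 ≤ n) (hb : 1 ≤ b) (hlb : ℓ + b ≤ n)
    (μ : ℕ → ℝ) (hpos : ∀ i, 1 ≤ i → i ≤ n → 0 < μ i)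
    (hdec : ∀ i j, 1 ≤ i → i < j → j ≤ n → μ j < μ i)
    (lam σ : ℝ) (hlam : 0 < lam) (hσ : 0 < σ)
    (a : ℕ → ℝ) (ha : ∀ i, a i = (μ i + lam)^2 - lam^2)
    (M : ℕ → ℝ)
    (hM : ∀ r, M r = 1 - (1/b) * (∑ i ∈ Finset.Icc (ℓ+1) (min (ℓ+b) r), a i / (μ i + lam)^2)
        + (σ^2 / n) * ∑ i ∈ Finset.Icc 1 r, (μ i)^2 / (μ i + lam)^2) :
    ∀ i : ℕ, ℓ + 1 ≤ i → i ≤ ℓ + b →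
      ((σ^2 / n) * b < 1 + 2*lam/μ i →
        (σ^2 / n) * (μ i)^2 < (1/b) * a i ∧ M i < M (i-1)) ∧
      (1 + 2*lam/μ i ≤ (σ^2 / n) * b → M (i-1) ≤ M i) :=
  stmt11_general n ℓ b hlb μ hpos lam σ hlam a ha M hM
end

section
/- Let λ ∈ ℝ with λ > 0, α ≥ 1, γ ∈ (0,1), n a positive integer, and suppose λ^{-1/α} ≥ n. Then for μ_i = i^{-α} and (ξ*_i)² = i^{-2γα-1}, the bias term Σ_{i=1}^{n} λ²(ξ*_i)²/(μ_i+λ)² is at least c·min(λ², λ²·n^{2(1−γ)α}) for some constant c > 0 depending only on α, γ; in particular when λ ≥ n^{-α} it is bounded below by a constant times λ^{2γ}. -/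
/-- Per-term lower bound on the half range. -/
lemma stmt17_aux_term (α γ : ℝ) (hα : 1 ≤ α) (hγ0 : 0 < γ) (hγ1 : γ < 1)
    (n i : ℕ) (hi1 : 1 ≤ i) (hin : i ≤ n) (h2i : n ≤ 2 * i) :
    ((n:ℝ)^(-α))^2/4 * ((2:ℝ)^(-(2*α)) * (n:ℝ)^(2*α - 2*γ*α - 1)) ≤
      ((n:ℝ)^(-α))^2 * (i:ℝ)^(-(2*γ*α)-1) / ((i:ℝ)^(-α) + (n:ℝ)^(-α))^2 := by
  have hα0 : (0:ℝ) < α := lt_of_lt_of_le one_pos hα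
  set B : ℝ := 2*α - 2*γ*α - 1 with hB
  set lam : ℝ := (n:ℝ)^(-α) with hlam
  have hx1 : (1:ℝ) ≤ (i:ℝ) := by exact_mod_cast hi1
  have hx0 : (0:ℝ) < (i:ℝ) := lt_of_lt_of_le one_pos hx1
  have hn1 : (1:ℝ) ≤ (n:ℝ) := by exact_mod_cast le_trans hi1 hin
  have hn0 : (0:ℝ) < (n:ℝ) := lt_of_lt_of_le one_pos hn1
  have hxn : (i:ℝ) ≤ (n:ℝ) := by exact_mod_cast hin
  have h2x : (n:ℝ) ≤ 2 * (i:ℝ) := by exact_mod_cast h2i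
  have hlampos : (0:ℝ) < lam := Real.rpow_pos_of_pos hn0 _
  have hlami : lam ≤ (i:ℝ)^(-α) :=
    Real.rpow_le_rpow_of_nonpos hx0 hxn (neg_nonpos.mpr hα0.le)
  have hDpos : (0:ℝ) < (i:ℝ)^(-α) := Real.rpow_pos_of_pos hx0 _
  have sqrpow : ∀ x : ℝ, 0 < x → (x ^ (-α))^2 = x ^ (-(2*α)) := by
    intro x hx
    rw [sq, ← Real.rpow_add hx]
    congr 1; ring
  -- denominator bound
  have hden : ((i:ℝ)^(-α) + lam)^2 ≤ 4 * (i:ℝ)^(-(2*α)) := by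
    have h1 : ((i:ℝ)^(-α) + lam)^2 ≤ (2 * (i:ℝ)^(-α))^2 := by
      have h : (i:ℝ)^(-α) + lam ≤ 2 * (i:ℝ)^(-α) := by linarith
      exact pow_le_pow_left₀ (by positivity) h 2
    have h2 : (2 * (i:ℝ)^(-α))^2 = 4 * (i:ℝ)^(-(2*α)) := by
      rw [mul_pow, sqrpow _ hx0]; norm_num
    linarith
  have hstep1 : lam^2 * (i:ℝ)^(-(2*γ*α)-1) / (4 * (i:ℝ)^(-(2*α))) ≤
      lam^2 * (i:ℝ)^(-(2*γ*α)-1) / ((i:ℝ)^(-α) + lam)^2 :=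
    div_le_div_of_nonneg_left
      (mul_nonneg (sq_nonneg lam) (Real.rpow_nonneg hx0.le _)) (by positivity) hden
  have hstep2 : lam^2 * (i:ℝ)^(-(2*γ*α)-1) / (4 * (i:ℝ)^(-(2*α))) =
      lam^2/4 * (i:ℝ)^B := by
    have hmulv : (i:ℝ)^(-(2*γ*α)-1) = (i:ℝ)^B * (i:ℝ)^(-(2*α)) := by
      rw [← Real.rpow_add hx0]
      congr 1; rw [hB]; ring
    have hcne : (i:ℝ)^(-(2*α)) ≠ 0 := (Real.rpow_pos_of_pos hx0 _).ne'
    rw [hmulv]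
    field_simp
  -- i^B ≥ 2^{-2α} n^B
  have hiB : (2:ℝ)^(-(2*α)) * (n:ℝ)^B ≤ (i:ℝ)^B := by
    rcases le_or_gt 0 B with hB0 | hB0
    · have h1 : ((n:ℝ)/2)^B ≤ (i:ℝ)^B :=
        Real.rpow_le_rpow (by positivity) (by linarith) hB0
      have h2 : ((n:ℝ)/2)^B = (n:ℝ)^B / (2:ℝ)^B :=
        Real.div_rpow hn0.le (by norm_num) B
      have h3 : (2:ℝ)^(-(2*α)) ≤ (2:ℝ)^(-B) := by
        apply Real.rpow_le_rpow_of_exponent_le one_le_two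
        have : B ≤ 2*α := by rw [hB]; nlinarith
        linarith
      have h4 : (2:ℝ)^(-B) = ((2:ℝ)^B)⁻¹ := Real.rpow_neg (by norm_num) B
      have hnB : (0:ℝ) ≤ (n:ℝ)^B := Real.rpow_nonneg hn0.le B
      calc (2:ℝ)^(-(2*α)) * (n:ℝ)^B ≤ (2:ℝ)^(-B) * (n:ℝ)^B :=
            mul_le_mul_of_nonneg_right h3 hnB
        _ = (n:ℝ)^B / (2:ℝ)^B := by rw [h4]; ring
        _ = ((n:ℝ)/2)^B := h2.symm
        _ ≤ (i:ℝ)^B := h1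
    · have h1 : (n:ℝ)^B ≤ (i:ℝ)^B :=
        Real.rpow_le_rpow_of_nonpos hx0 hxn hB0.le
      have h2 : (2:ℝ)^(-(2*α)) ≤ 1 :=
        Real.rpow_le_one_of_one_le_of_nonpos one_le_two (by linarith)
      have hnB : (0:ℝ) ≤ (n:ℝ)^B := Real.rpow_nonneg hn0.le B
      nlinarith
  calc lam^2/4 * ((2:ℝ)^(-(2*α)) * (n:ℝ)^B) ≤ lam^2/4 * (i:ℝ)^B :=
        mul_le_mul_of_nonneg_left hiB (by positivity)
    _ = lam^2 * (i:ℝ)^(-(2*γ*α)-1) / (4 * (i:ℝ)^(-(2*α))) := hstep2.symm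
    _ ≤ _ := hstep1

/-- Sum lower bound in the critical case lam = n^{-α}. -/
lemma stmt17_aux_sum (α γ : ℝ) (hα : 1 ≤ α) (hγ0 : 0 < γ) (hγ1 : γ < 1)
    (n : ℕ) (hn : 1 ≤ n) :
    (2:ℝ)^(-(2*α+3)) * ((n:ℝ)^(-α)) ^ (2*γ) ≤
      ∑ i ∈ Finset.Icc 1 n,
        ((n:ℝ)^(-α))^2 * (i:ℝ)^(-(2*γ*α)-1) / ((i:ℝ)^(-α) + (n:ℝ)^(-α))^2 := by
  have hα0 : (0:ℝ) < α := lt_of_lt_of_le one_pos hα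
  set B : ℝ := 2*α - 2*γ*α - 1 with hB
  set lam : ℝ := (n:ℝ)^(-α) with hlam
  have hn1 : (1:ℝ) ≤ (n:ℝ) := by exact_mod_cast hn
  have hn0 : (0:ℝ) < (n:ℝ) := lt_of_lt_of_le one_pos hn1
  have hlampos : (0:ℝ) < lam := Real.rpow_pos_of_pos hn0 _
  set m : ℕ := (n+1)/2 with hm
  have hm1 : 1 ≤ m := by omega
  have hmn : m ≤ n := by omega
  have hsub : Finset.Icc m n ⊆ Finset.Icc 1 n := Finset.Icc_subset_Icc hm1 le_rfl
  have hne : ∀ i ∈ Finset.Icc 1 n,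
      (0:ℝ) ≤ lam^2 * (i:ℝ)^(-(2*γ*α)-1) / ((i:ℝ)^(-α) + lam)^2 := by
    intro i _
    exact div_nonneg (mul_nonneg (sq_nonneg lam) (Real.rpow_nonneg (Nat.cast_nonneg i) _))
      (sq_nonneg _)
  have hterm : ∀ i ∈ Finset.Icc m n,
      lam^2/4 * ((2:ℝ)^(-(2*α)) * (n:ℝ)^B) ≤
        lam^2 * (i:ℝ)^(-(2*γ*α)-1) / ((i:ℝ)^(-α) + lam)^2 := by
    intro i hi
    rw [Finset.mem_Icc] at hi
    exact stmt17_aux_term α γ hα hγ0 hγ1 n i (le_trans hm1 hi.1) hi.2 (by omega)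
  have hcard : (Finset.Icc m n).card = n + 1 - m := Nat.card_Icc m n
  have hcardge : (n:ℝ)/2 ≤ ((Finset.Icc m n).card : ℝ) := by
    rw [hcard]
    have h : n ≤ 2 * (n + 1 - m) := by omega
    have h' : (n:ℝ) ≤ 2 * ((n + 1 - m : ℕ) : ℝ) := by exact_mod_cast h
    linarith
  have hsum1 : ((Finset.Icc m n).card : ℝ) * (lam^2/4 * ((2:ℝ)^(-(2*α)) * (n:ℝ)^B)) ≤
      ∑ i ∈ Finset.Icc m n, lam^2 * (i:ℝ)^(-(2*γ*α)-1) / ((i:ℝ)^(-α) + lam)^2 := by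
    have h := Finset.card_nsmul_le_sum (Finset.Icc m n)
      (fun i => lam^2 * (i:ℝ)^(-(2*γ*α)-1) / ((i:ℝ)^(-α) + lam)^2)
      (lam^2/4 * ((2:ℝ)^(-(2*α)) * (n:ℝ)^B)) hterm
    simpa [nsmul_eq_mul] using h
  have hsum2 : ∑ i ∈ Finset.Icc m n, lam^2 * (i:ℝ)^(-(2*γ*α)-1) / ((i:ℝ)^(-α) + lam)^2 ≤
      ∑ i ∈ Finset.Icc 1 n, lam^2 * (i:ℝ)^(-(2*γ*α)-1) / ((i:ℝ)^(-α) + lam)^2 :=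
    Finset.sum_le_sum_of_subset_of_nonneg hsub (fun i hi _ => hne i hi)
  have hCnn : (0:ℝ) ≤ lam^2/4 * ((2:ℝ)^(-(2*α)) * (n:ℝ)^B) := by positivity
  have hhalf : (n:ℝ)/2 * (lam^2/4 * ((2:ℝ)^(-(2*α)) * (n:ℝ)^B)) ≤
      ∑ i ∈ Finset.Icc 1 n, lam^2 * (i:ℝ)^(-(2*γ*α)-1) / ((i:ℝ)^(-α) + lam)^2 :=
    le_trans (mul_le_mul_of_nonneg_right hcardge hCnn) (le_trans hsum1 hsum2)
  -- constant computation
  have e1 : lam^2 = (n:ℝ)^(-(2*α)) := by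
    rw [hlam, sq, ← Real.rpow_add hn0]
    congr 1; ring
  have e2 : (n:ℝ)^(-(2*γ*α)) = (n:ℝ) * ((n:ℝ)^(-(2*α)) * (n:ℝ)^B) := by
    rw [show -(2*γ*α) = 1 + (-(2*α) + B) by rw [hB]; ring,
      Real.rpow_add hn0, Real.rpow_add hn0, Real.rpow_one]
  have e3 : (2:ℝ)^(-(2*α+3)) = (2:ℝ)^(-(2*α)) / 8 := by
    rw [show -(2*α+3) = -(2*α) + (-3) by ring, Real.rpow_add two_pos,
      show ((2:ℝ))^(-3:ℝ) = 1/8 by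
        rw [show (-3:ℝ) = ((-3:ℤ):ℝ) by norm_num, Real.rpow_intCast]; norm_num]
    ring
  have e4 : lam ^ (2*γ) = (n:ℝ)^(-(2*γ*α)) := by
    rw [hlam, ← Real.rpow_mul hn0.le]
    congr 1; ring
  have e5 : (2:ℝ)^(-(2*α+3)) * lam ^ (2*γ) =
      (n:ℝ)/2 * (lam^2/4 * ((2:ℝ)^(-(2*α)) * (n:ℝ)^B)) := by
    rw [e4, e2, e3, e1]; ring
  rw [e5]; exact hhalf

theorem stmt17 (α γ : ℝ) (hα : 1 ≤ α) (hγ0 : 0 < γ) (hγ1 : γ < 1) :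
    ∃ c : ℝ, 0 < c ∧ ∀ (lam : ℝ) (n : ℕ), 0 < lam → 1 ≤ n → (n:ℝ) ≤ lam ^ (-1/α) →
      (c * min (lam^2) (lam^2 * (n:ℝ)^(2*(1-γ)*α)) ≤
        ∑ i ∈ Finset.Icc 1 n, lam^2 * (i:ℝ)^(-(2*γ*α)-1) / ((i:ℝ)^(-α) + lam)^2) ∧
      ((n:ℝ)^(-α) ≤ lam →
        c * lam ^ (2*γ) ≤
          ∑ i ∈ Finset.Icc 1 n, lam^2 * (i:ℝ)^(-(2*γ*α)-1) / ((i:ℝ)^(-α) + lam)^2) := by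
  have hα0 : (0:ℝ) < α := lt_of_lt_of_le one_pos hα
  refine ⟨(2:ℝ) ^ (-(2*α+3)), Real.rpow_pos_of_pos two_pos _, ?_⟩
  intro lam n hlam hn hle
  have hn1 : (1:ℝ) ≤ (n:ℝ) := by exact_mod_cast hn
  have hn0 : (0:ℝ) < (n:ℝ) := lt_of_lt_of_le one_pos hn1
  -- lam ≤ n^{-α}
  have hlamle : lam ≤ (n:ℝ) ^ (-α) := by
    have h1 : (lam ^ (-1/α)) ^ (-α) ≤ (n:ℝ) ^ (-α) :=
      Real.rpow_le_rpow_of_nonpos (by positivity) hle (neg_nonpos.mpr hα0.le)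
    have h2 : (lam ^ (-1/α)) ^ (-α) = lam := by
      rw [← Real.rpow_mul hlam.le]
      rw [show (-1/α) * (-α) = 1 by field_simp]
      exact Real.rpow_one lam
    rwa [h2] at h1
  have hne : ∀ i ∈ Finset.Icc 1 n,
      (0:ℝ) ≤ lam^2 * (i:ℝ)^(-(2*γ*α)-1) / ((i:ℝ)^(-α) + lam)^2 := by
    intro i _
    exact div_nonneg (mul_nonneg (sq_nonneg lam) (Real.rpow_nonneg (Nat.cast_nonneg i) _))
      (sq_nonneg _)
  have hlam1 : lam ≤ 1 :=
    hlamle.trans (Real.rpow_le_one_of_one_le_of_nonpos hn1 (neg_nonpos.mpr hα0.le))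
  have hc4 : (2:ℝ) ^ (-(2*α+3)) ≤ 1/4 := by
    have h1 : (2:ℝ) ^ (-(2*α+3)) ≤ (2:ℝ) ^ (-2:ℝ) :=
      Real.rpow_le_rpow_of_exponent_le one_le_two (by linarith)
    have h2 : (2:ℝ) ^ (-2:ℝ) = 1/4 := by
      rw [show (-2:ℝ) = ((-2:ℤ):ℝ) by norm_num, Real.rpow_intCast]; norm_num
    exact h1.trans (le_of_eq h2)
  constructor
  · -- first inequality via the single term i = 1
    have h1mem : 1 ∈ Finset.Icc 1 n := Finset.mem_Icc.mpr ⟨le_refl 1, hn⟩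
    have hsingle : lam^2 * ((1:ℕ):ℝ)^(-(2*γ*α)-1) / (((1:ℕ):ℝ)^(-α) + lam)^2 ≤
        ∑ i ∈ Finset.Icc 1 n, lam^2 * (i:ℝ)^(-(2*γ*α)-1) / ((i:ℝ)^(-α) + lam)^2 :=
      Finset.single_le_sum hne h1mem
    have hsingle' : lam^2 / (1 + lam)^2 ≤
        ∑ i ∈ Finset.Icc 1 n, lam^2 * (i:ℝ)^(-(2*γ*α)-1) / ((i:ℝ)^(-α) + lam)^2 := by
      simpa [Real.one_rpow] using hsingle
    have hquarter : lam^2/4 ≤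
        ∑ i ∈ Finset.Icc 1 n, lam^2 * (i:ℝ)^(-(2*γ*α)-1) / ((i:ℝ)^(-α) + lam)^2 := by
      have hd : (1 + lam)^2 ≤ 4 := by nlinarith
      have h : lam^2/4 ≤ lam^2/(1+lam)^2 := by
        rw [div_le_div_iff₀ (by norm_num) (by positivity)]
        nlinarith [sq_nonneg lam]
      linarith
    have hmin : min (lam^2) (lam^2 * (n:ℝ)^(2*(1-γ)*α)) ≤ lam^2 := min_le_left _ _
    have hminnn : (0:ℝ) ≤ min (lam^2) (lam^2 * (n:ℝ)^(2*(1-γ)*α)) :=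
      le_min (sq_nonneg _) (mul_nonneg (sq_nonneg _) (Real.rpow_nonneg hn0.le _))
    have h : (2:ℝ) ^ (-(2*α+3)) * min (lam^2) (lam^2 * (n:ℝ)^(2*(1-γ)*α)) ≤ (1/4) * lam^2 :=
      mul_le_mul hc4 hmin hminnn (by norm_num)
    nlinarith
  · -- second inequality
    intro hge
    have hlameq : lam = (n:ℝ)^(-α) := le_antisymm hlamle hge
    rw [hlameq]
    exact stmt17_aux_sum α γ hα hγ0 hγ1 n hn
end
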